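/- Let 0<λ₁<λ₂, Θ=(λ₁,λ₂), c>0, Δ>0, n≥1. Let D={(x,y): x²+y²<c²Δ²}, u(x,y)=c²Δ²−x²−y², p_λ(x,y) = (λ/(2πc)) e^{−λΔ+(λ/c)√(u(x,y))}/√(u(x,y)), and for w=(w₁,…,wₙ)∈Dⁿ let q_λ(w)=∏_{i=1}^n p_λ(w_i). Let T: (ℝ²)ⁿ → ℝ be measurable with ∫_{Dⁿ} T(w)² q_λ(w) dw < ∞ for every λ∈Θ. Then the map λ ↦ ∫_{Dⁿ} T(w) q_λ(w) dw is differentiable on Θ, with derivative ∫_{Dⁿ} T(w) q_λ(w) (n/λ − nΔ + (1/c) Σ_{i=1}^n √(u(w_i))) dw. -/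

import Mathlib

/-!
On the polydisc `Dⁿ` the joint density is an exponential family in `λ`:
`q_λ(w) = h(w) λⁿ exp (λ B(w))` with `h ≥ 0` and `B(w) = Σᵢ (√u(wᵢ)/c - Δ) ∈ [-nΔ, 0]`.
Hence, for `λ` near `λ₀` and above some `a ∈ (λ₁, λ₀)`, both `q_λ` and its `λ`-derivative
`q_λ (n/λ + B)` are bounded by a constant multiple of `q_a`. Moreover `T q_a` is integrable,
because `|T| ≤ T² + 1` and `q_a` is integrable: the singularity `1/√u` is integrable on the disc,
as polar coordinates show. Dominated differentiation under the integral sign concludes.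
-/

open MeasureTheory Real

/-- The absolutely continuous density of a planar random flight at time step `Δ`,
speed `c` and Poisson rate `μ`, evaluated at the point `q` of the open disc of
radius `cΔ`. -/
noncomputable def prfDensity (c Δ μ : ℝ) (q : ℝ × ℝ) : ℝ :=
  μ / (2 * π * c) *
    Real.exp (-μ * Δ + μ / c * Real.sqrt (c ^ 2 * Δ ^ 2 - q.1 ^ 2 - q.2 ^ 2)) /
      Real.sqrt (c ^ 2 * Δ ^ 2 - q.1 ^ 2 - q.2 ^ 2)

open Set

lemma integrableOn_Ioi_mul_inv_sqrt_sub_sq (r : ℝ) :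
    IntegrableOn (fun y : ℝ => y * (√(r - y ^ 2))⁻¹) (Ioi 0) := by
  have hIoc : IntegrableOn (fun y : ℝ => y * (√(r - y ^ 2))⁻¹) (Ioc 0 √r) := by
    refine intervalIntegral.integrableOn_deriv_of_nonneg (g := fun y => -√(r - y ^ 2))
      (by fun_prop) (fun y hy => ?_) (fun y hy => by have := hy.1; positivity)
    have hpos : 0 < r - y ^ 2 := by
      have := (lt_sqrt hy.1.le).1 hy.2
      linarith
    refine (((hasDerivAt_pow 2 y).const_sub r).sqrt hpos.ne').neg.congr_deriv ?_
    field_simp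
    ring
  have hIoi : IntegrableOn (fun y : ℝ => y * (√(r - y ^ 2))⁻¹) (Ioi √r) := by
    refine integrableOn_zero.congr_fun (fun y hy => ?_) measurableSet_Ioi
    have : r < y ^ 2 := lt_sq_of_sqrt_lt hy
    simp [sqrt_eq_zero_of_nonpos (by linarith : r - y ^ 2 ≤ 0)]
  rw [← Ioc_union_Ioi_eq_Ioi (sqrt_nonneg r)]
  exact hIoc.union hIoi

-- Off the open disc the integrand is `(√0)⁻¹ = 0`, so this is integrability on the disc.
lemma integrable_inv_sqrt_sub_sq_sub_sq (r : ℝ) :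
    Integrable (fun q : ℝ × ℝ => (√(r - q.1 ^ 2 - q.2 ^ 2))⁻¹) := by
  have hℂ : Integrable (fun z : ℂ => (√(r - ‖z‖ ^ 2))⁻¹) :=
    (integrable_fun_norm_addHaar volume (f := fun y => (√(r - y ^ 2))⁻¹)).2 <| by
      simpa [Complex.finrank_real_complex] using integrableOn_Ioi_mul_inv_sqrt_sub_sq r
  rw [← Complex.volume_preserving_equiv_real_prod.integrable_comp_emb
    Complex.measurableEquivRealProd.measurableEmbedding]
  refine hℂ.congr (ae_of_all _ fun z => ?_)
  simp [Complex.sq_norm, Complex.normSq_apply, sub_sub, ← sq]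

lemma integrable_mul_of_integrable_sq_mul {α : Type*} [MeasurableSpace α] {μ : Measure α}
    {f T : α → ℝ} (hf : Integrable f μ) (hf0 : 0 ≤ᵐ[μ] f)
    (hTf : AEStronglyMeasurable (fun w => T w * f w) μ)
    (hT2f : Integrable (fun w => T w ^ 2 * f w) μ) :
    Integrable (fun w => T w * f w) μ := by
  refine (hT2f.add hf).mono' hTf ?_
  filter_upwards [hf0] with w hw
  have hT : |T w| ≤ T w ^ 2 + 1 := by nlinarith [sq_abs (T w), abs_nonneg (T w)]
  calc ‖T w * f w‖ = |T w| * f w := by rw [norm_mul, Real.norm_eq_abs, Real.norm_of_nonneg hw]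
    _ ≤ (T w ^ 2 + 1) * f w := mul_le_mul_of_nonneg_right hT hw
    _ = T w ^ 2 * f w + f w := by ring

section ExponentialFamily

lemma hasDerivAt_pow_mul_exp_mul (n : ℕ) (b : ℝ) {x : ℝ} (hx : x ≠ 0) :
    HasDerivAt (fun t => t ^ n * exp (t * b)) (x ^ n * exp (x * b) * (n / x + b)) x := by
  refine ((hasDerivAt_pow n x).mul ((hasDerivAt_mul_const b).exp)).congr_deriv ?_
  rcases n with _ | n
  · simp
  · rw [Nat.add_sub_cancel]
    field_simp
    ring

variable {n : ℕ} {a x b : ℝ}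

lemma norm_mul_pow_mul_exp_mul_le (y : ℝ) (ha : 0 < a) (hax : a ≤ x) (hb : b ≤ 0) :
    ‖y * (x ^ n * exp (x * b))‖ ≤ (x / a) ^ n * ‖y * (a ^ n * exp (a * b))‖ := by
  have hx : 0 ≤ x := ha.le.trans hax
  have hxb : 0 ≤ x ^ n * exp (x * b) := by positivity
  have hab : 0 ≤ a ^ n * exp (a * b) := by positivity
  have key : x ^ n * exp (x * b) ≤ (x / a) ^ n * (a ^ n * exp (a * b)) := by
    rw [← mul_assoc, ← mul_pow, div_mul_cancel₀ x ha.ne']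
    exact mul_le_mul_of_nonneg_left (exp_le_exp.2 (by nlinarith)) (by positivity)
  rw [norm_mul y, norm_mul y, Real.norm_of_nonneg hxb, Real.norm_of_nonneg hab,
    mul_left_comm ((x / a) ^ n)]
  exact mul_le_mul_of_nonneg_left key (norm_nonneg y)

lemma norm_natCast_div_add_le {M : ℝ} (ha : 0 < a) (hax : a ≤ x) (hb : b ∈ Icc (-M) 0) :
    ‖(n : ℝ) / x + b‖ ≤ n / a + M := by
  have h₀ : (0 : ℝ) ≤ n / x := by have := ha.trans_le hax; positivity
  have h₁ : (n : ℝ) / x ≤ n / a := by gcongr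
  rw [Real.norm_eq_abs, abs_le]
  constructor <;> linarith [hb.1, hb.2]

variable {α : Type*} [MeasurableSpace α] {μ : Measure α}

theorem hasDerivAt_integral_mul_pow_mul_exp_mul {g B : α → ℝ} {x₀ M : ℝ}
    (hg : AEStronglyMeasurable g μ) (hB : AEStronglyMeasurable B μ)
    (hBM : ∀ᵐ w ∂μ, B w ∈ Icc (-M) 0) (ha : 0 < a) (hax₀ : a < x₀)
    (hint : Integrable (fun w => g w * (a ^ n * exp (a * B w))) μ) :
    HasDerivAt (fun x => ∫ w, g w * (x ^ n * exp (x * B w)) ∂μ)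
      (∫ w, g w * (x₀ ^ n * exp (x₀ * B w)) * (n / x₀ + B w) ∂μ) x₀ := by
  have hx₀ : 0 < x₀ := ha.trans hax₀
  have hball : ∀ x ∈ Metric.ball x₀ (x₀ - a), a < x ∧ x < 2 * x₀ := by
    intro x hx
    rw [Metric.mem_ball, Real.dist_eq, abs_lt] at hx
    constructor <;> linarith
  have hmeas : ∀ x, AEStronglyMeasurable (fun w => g w * (x ^ n * exp (x * B w))) μ := fun x =>
    hg.mul <| Continuous.comp_aestronglyMeasurable (g := fun b => x ^ n * exp (x * b))
      (by fun_prop) hB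
  refine (hasDerivAt_integral_of_dominated_loc_of_deriv_le
    (F' := fun x w => g w * (x ^ n * exp (x * B w)) * (n / x + B w))
    (bound := fun w => (2 * x₀ / a) ^ n * (n / a + M) * ‖g w * (a ^ n * exp (a * B w))‖)
    (Metric.ball_mem_nhds x₀ (sub_pos.2 hax₀)) (.of_forall hmeas) ?_
    ((hmeas x₀).mul (aestronglyMeasurable_const.add hB)) ?_ (hint.norm.const_mul _) ?_).2
  · refine (hint.norm.const_mul ((x₀ / a) ^ n)).mono' (hmeas x₀) ?_
    filter_upwards [hBM] with w hw using norm_mul_pow_mul_exp_mul_le _ ha hax₀.le hw.2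
  · filter_upwards [hBM] with w hw x hx
    obtain ⟨hax, hx₂⟩ := hball x hx
    rw [norm_mul, mul_right_comm]
    gcongr
    · exact (norm_mul_pow_mul_exp_mul_le _ ha hax.le hw.2).trans <| by
        gcongr
        exact div_nonneg (ha.trans hax).le ha.le
    · exact norm_natCast_div_add_le ha hax.le hw
  · refine .of_forall fun w x hx => ?_
    simpa only [mul_assoc] using
      (hasDerivAt_pow_mul_exp_mul n (B w) (ha.trans (hball x hx).1).ne').const_mul (g w)

end ExponentialFamily

section PlanarRandomFlight

noncomputable def prfWeight (c Δ : ℝ) (q : ℝ × ℝ) : ℝ :=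
  (2 * π * c * √(c ^ 2 * Δ ^ 2 - q.1 ^ 2 - q.2 ^ 2))⁻¹

noncomputable def prfExponent (c Δ : ℝ) (q : ℝ × ℝ) : ℝ :=
  √(c ^ 2 * Δ ^ 2 - q.1 ^ 2 - q.2 ^ 2) / c - Δ

variable {c Δ : ℝ}

lemma prfDensity_eq_weight_mul (c Δ μ : ℝ) (q : ℝ × ℝ) :
    prfDensity c Δ μ q = prfWeight c Δ q * (μ * exp (μ * prfExponent c Δ q)) := by
  rw [prfDensity, prfWeight, prfExponent,
    show -μ * Δ + μ / c * √(c ^ 2 * Δ ^ 2 - q.1 ^ 2 - q.2 ^ 2) =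
      μ * (√(c ^ 2 * Δ ^ 2 - q.1 ^ 2 - q.2 ^ 2) / c - Δ) by ring]
  ring

lemma prod_prfDensity {ι : Type*} [Fintype ι] (c Δ μ : ℝ) (w : ι → ℝ × ℝ) :
    ∏ i, prfDensity c Δ μ (w i) =
      (∏ i, prfWeight c Δ (w i)) *
        (μ ^ Fintype.card ι * exp (μ * ∑ i, prfExponent c Δ (w i))) := by
  simp_rw [prfDensity_eq_weight_mul, Finset.prod_mul_distrib, Finset.prod_const, ← Real.exp_sum,
    Finset.mul_sum, Finset.card_univ]

lemma sum_prfExponent {ι : Type*} [Fintype ι] (c Δ : ℝ) (w : ι → ℝ × ℝ) :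
    ∑ i, prfExponent c Δ (w i) =
      1 / c * ∑ i, √(c ^ 2 * Δ ^ 2 - (w i).1 ^ 2 - (w i).2 ^ 2) - Fintype.card ι * Δ := by
  simp only [prfExponent, Finset.sum_sub_distrib, ← Finset.sum_div, Finset.sum_const,
    Finset.card_univ, nsmul_eq_mul]
  ring

lemma prfWeight_nonneg (hc : 0 ≤ c) (q : ℝ × ℝ) : 0 ≤ prfWeight c Δ q := by
  unfold prfWeight; positivity

lemma prfExponent_mem_Icc (hc : 0 < c) (hΔ : 0 ≤ Δ) (q : ℝ × ℝ) :
    prfExponent c Δ q ∈ Icc (-Δ) 0 := by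
  have hle : √(c ^ 2 * Δ ^ 2 - q.1 ^ 2 - q.2 ^ 2) ≤ c * Δ :=
    Real.sqrt_le_iff.2 ⟨by positivity, by nlinarith [sq_nonneg q.1, sq_nonneg q.2]⟩
  unfold prfExponent
  constructor
  · linarith [div_nonneg (sqrt_nonneg (c ^ 2 * Δ ^ 2 - q.1 ^ 2 - q.2 ^ 2)) hc.le]
  · rw [sub_nonpos, div_le_iff₀ hc]
    linarith

lemma sum_prfExponent_mem_Icc {ι : Type*} [Fintype ι] (hc : 0 < c) (hΔ : 0 ≤ Δ)
    (w : ι → ℝ × ℝ) :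
    ∑ i, prfExponent c Δ (w i) ∈ Icc (-(Fintype.card ι * Δ)) 0 := by
  constructor
  · calc -(Fintype.card ι * Δ) = ∑ _i : ι, -Δ := by simp
      _ ≤ _ := Finset.sum_le_sum fun i _ => (prfExponent_mem_Icc hc hΔ (w i)).1
  · exact Finset.sum_nonpos fun i _ => (prfExponent_mem_Icc hc hΔ (w i)).2

lemma measurable_prfDensity (c Δ μ : ℝ) : Measurable (prfDensity c Δ μ) := by
  unfold prfDensity; fun_prop

lemma prfDensity_nonneg {μ : ℝ} (hc : 0 ≤ c) (hμ : 0 ≤ μ) (q : ℝ × ℝ) :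
    0 ≤ prfDensity c Δ μ q := by
  unfold prfDensity; positivity

lemma integrable_prfDensity {μ : ℝ} (hc : 0 < c) (hΔ : 0 ≤ Δ) (hμ : 0 ≤ μ) :
    Integrable (prfDensity c Δ μ) := by
  refine ((integrable_inv_sqrt_sub_sq_sub_sq (c ^ 2 * Δ ^ 2)).const_mul
    (μ * (2 * π * c)⁻¹)).mono' (measurable_prfDensity c Δ μ).aestronglyMeasurable
    (ae_of_all _ fun q => ?_)
  have hexp : exp (μ * prfExponent c Δ q) ≤ 1 :=
    exp_le_one_iff.2 (mul_nonpos_of_nonneg_of_nonpos hμ (prfExponent_mem_Icc hc hΔ q).2)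
  rw [Real.norm_of_nonneg (prfDensity_nonneg hc.le hμ q), prfDensity_eq_weight_mul]
  calc prfWeight c Δ q * (μ * exp (μ * prfExponent c Δ q)) ≤ prfWeight c Δ q * (μ * 1) := by
        gcongr
        exact prfWeight_nonneg hc.le q
    _ = _ := by rw [prfWeight, mul_inv]; ring

lemma integrable_prod_prfDensity {ι : Type*} [Fintype ι] {μ : ℝ} (hc : 0 < c) (hΔ : 0 ≤ Δ)
    (hμ : 0 ≤ μ) : Integrable (fun w : ι → ℝ × ℝ => ∏ i, prfDensity c Δ μ (w i)) :=
  Integrable.fintype_prod fun _ => integrable_prfDensity hc hΔ hμ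

end PlanarRandomFlight

theorem diff_under_integral_pseudo_likelihood_general
    (lam₁ lam₂ c Δ : ℝ) (h1 : 0 < lam₁) (hc : 0 < c) (hΔ : 0 < Δ)
    (n : ℕ)
    (T : (Fin n → ℝ × ℝ) → ℝ) (hT : Measurable T)
    (hint : ∀ lam ∈ Set.Ioo lam₁ lam₂,
      IntegrableOn (fun w : Fin n → ℝ × ℝ => T w ^ 2 * ∏ i, prfDensity c Δ lam (w i))
        {w : Fin n → ℝ × ℝ | ∀ i, (w i).1 ^ 2 + (w i).2 ^ 2 < c ^ 2 * Δ ^ 2}) :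
    ∀ lam ∈ Set.Ioo lam₁ lam₂,
      HasDerivAt
        (fun μ : ℝ =>
          ∫ w in {w : Fin n → ℝ × ℝ | ∀ i, (w i).1 ^ 2 + (w i).2 ^ 2 < c ^ 2 * Δ ^ 2},
            T w * ∏ i, prfDensity c Δ μ (w i))
        (∫ w in {w : Fin n → ℝ × ℝ | ∀ i, (w i).1 ^ 2 + (w i).2 ^ 2 < c ^ 2 * Δ ^ 2},
          T w * (∏ i, prfDensity c Δ lam (w i)) *
            ((n : ℝ) / lam - n * Δ +
              1 / c * ∑ i, Real.sqrt (c ^ 2 * Δ ^ 2 - (w i).1 ^ 2 - (w i).2 ^ 2)))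
        lam := by
  rintro lam ⟨hl₁, hl₂⟩
  obtain ⟨a, ha₁, ha₂⟩ := exists_between hl₁
  have ha : a ∈ Ioo lam₁ lam₂ := ⟨ha₁, ha₂.trans hl₂⟩
  have ha₀ : 0 < a := h1.trans ha.1
  have hTq : IntegrableOn (fun w => T w * ∏ i, prfDensity c Δ a (w i))
      {w : Fin n → ℝ × ℝ | ∀ i, (w i).1 ^ 2 + (w i).2 ^ 2 < c ^ 2 * Δ ^ 2} :=
    integrable_mul_of_integrable_sq_mul (integrable_prod_prfDensity hc hΔ.le ha₀.le).integrableOn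
      (ae_of_all _ fun w => Finset.prod_nonneg fun i _ => prfDensity_nonneg hc.le ha₀.le _)
      (by have := measurable_prfDensity c Δ a; fun_prop) (hint a ha)
  have hF : ∀ μ w, T w * ∏ i, prfDensity c Δ μ (w i) =
      (T w * ∏ i, prfWeight c Δ (w i)) * (μ ^ n * exp (μ * ∑ i, prfExponent c Δ (w i))) :=
    fun μ w => by rw [prod_prfDensity, Fintype.card_fin, mul_assoc]
  have hscore : ∀ w : Fin n → ℝ × ℝ, (n : ℝ) / lam - n * Δ +
      1 / c * ∑ i, √(c ^ 2 * Δ ^ 2 - (w i).1 ^ 2 - (w i).2 ^ 2) =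
      n / lam + ∑ i, prfExponent c Δ (w i) :=
    fun w => by rw [sum_prfExponent, Fintype.card_fin]; ring
  simp only [hF, hscore] at hTq ⊢
  exact hasDerivAt_integral_mul_pow_mul_exp_mul
    (hT.aestronglyMeasurable.mul (by unfold prfWeight; fun_prop)) (by unfold prfExponent; fun_prop)
    (ae_of_all _ fun w => by simpa using sum_prfExponent_mem_Icc hc hΔ.le w) ha₀ ha₂ hTq

/-- Differentiation under the integral sign in the pseudo-likelihood model
(key step in the proof of the Cramér–Rao inequality, Theorem 3.4):
if `T` is measurable and square-integrable against the joint density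
`q_λ(w) = ∏ᵢ p_λ(wᵢ)` for every `λ ∈ Θ = (λ₁, λ₂)`, then
`λ ↦ ∫ T q_λ` is differentiable on `Θ` with derivative
`∫ T q_λ (n/λ − nΔ + (1/c) Σᵢ √(u(wᵢ)))`. -/
theorem diff_under_integral_pseudo_likelihood
    (lam₁ lam₂ c Δ : ℝ) (h1 : 0 < lam₁) (h12 : lam₁ < lam₂) (hc : 0 < c) (hΔ : 0 < Δ)
    (n : ℕ) (hn : 1 ≤ n)
    (T : (Fin n → ℝ × ℝ) → ℝ) (hT : Measurable T)
    (hint : ∀ lam ∈ Set.Ioo lam₁ lam₂,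
      IntegrableOn (fun w : Fin n → ℝ × ℝ => T w ^ 2 * ∏ i, prfDensity c Δ lam (w i))
        {w : Fin n → ℝ × ℝ | ∀ i, (w i).1 ^ 2 + (w i).2 ^ 2 < c ^ 2 * Δ ^ 2}) :
    ∀ lam ∈ Set.Ioo lam₁ lam₂,
      HasDerivAt
        (fun μ : ℝ =>
          ∫ w in {w : Fin n → ℝ × ℝ | ∀ i, (w i).1 ^ 2 + (w i).2 ^ 2 < c ^ 2 * Δ ^ 2},
            T w * ∏ i, prfDensity c Δ μ (w i))
        (∫ w in {w : Fin n → ℝ × ℝ | ∀ i, (w i).1 ^ 2 + (w i).2 ^ 2 < c ^ 2 * Δ ^ 2},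
          T w * (∏ i, prfDensity c Δ lam (w i)) *
            ((n : ℝ) / lam - n * Δ +
              1 / c * ∑ i, Real.sqrt (c ^ 2 * Δ ^ 2 - (w i).1 ^ 2 - (w i).2 ^ 2)))
        lam :=
  diff_under_integral_pseudo_likelihood_general lam₁ lam₂ c Δ h1 hc hΔ n T hT hint
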